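/- arXiv:1606.08060 — 4 statements merged into one kernel-verified Lean document; each statement's English description precedes it below -/
import Mathlib

section
/- Let L > 0 and let h : ℝ → ℝ be C² with h′(x) < 0 for all x and h(x+L) = h(x) − 1; let φ : ℝ → ℝ be its inverse function, i.e. h(φ(α)) = α for all α (so φ(α+1) = φ(α) − L). Then for every α ∈ (0,1), lim_{δ→0⁺} ( ∫₀^{α−δ} + ∫_{α+δ}¹ ) (π/L) · cot(π(φ(α)−φ(β))/L) dβ = −π · (H h′)(φ(α)), where H is the L-periodic Hilbert transform. -/
/-!
Put `x = φ α`. The substitution `β = h y`, `dβ = h' y dy`, turns `∫ (π/L) cot(π(x - φ β)/L) dβ`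
into `(π/L) ∫ h'(x - s) cot(π s/L) ds`. Because `φ (β + 1) = φ β - L` and `cot` has period `π`,
the `β`-integrand has period `1`, so the two truncated pieces join into one integral over
`[α + δ, α + 1 - δ]`, i.e. `-π · (1/L) ∫_q^{L - p}` of the Hilbert kernel of `h'` at `x`, where
`p = φ (α - δ) - x` and `q = x - φ (α + δ)`. This truncation is not symmetric, but it differs from
the symmetric one `(q, L - q)` only by an integral over `(L - q, L - p)`, where the kernel is
`O(1/(L - s))`; that piece is `O(|p - q| / min p q)`, which tends to `0` because `p` and `q` are
both `|φ' α| δ + o(δ)`.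
-/

open Real Filter Topology MeasureTheory

namespace Real

lemma cot_add_pi (t : ℝ) : cot (t + π) = cot t := by
  rw [cot_eq_cos_div_sin, cot_eq_cos_div_sin, cos_add_pi, sin_add_pi, neg_div_neg_eq]

lemma cot_pi_sub (t : ℝ) : cot (π - t) = -cot t := by
  rw [cot_eq_cos_div_sin, cot_eq_cos_div_sin, cos_pi_sub, sin_pi_sub, neg_div]

lemma continuousAt_cot {t : ℝ} (ht : sin t ≠ 0) : ContinuousAt cot t := by
  rw [funext cot_eq_cos_div_sin]
  exact continuous_cos.continuousAt.div continuous_sin.continuousAt ht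

lemma abs_cot_le {t : ℝ} (ht : 0 < t) (ht' : t ≤ π / 2) : |cot t| ≤ π / (2 * t) := by
  have hsin : 2 / π * t ≤ sin t := mul_le_sin ht.le ht'
  have hpos : 0 < 2 / π * t := by positivity
  calc |cot t| = |cos t| / sin t := by
        rw [cot_eq_cos_div_sin, abs_div, abs_of_pos (hpos.trans_le hsin)]
    _ ≤ 1 / (2 / π * t) := div_le_div₀ zero_le_one (abs_cos_le_one t) hpos hsin
    _ = π / (2 * t) := by field_simp

end Real

lemma Antitone.continuous_of_surjective {α β : Type*} [LinearOrder α] [TopologicalSpace α]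
    [OrderTopology α] [LinearOrder β] [TopologicalSpace β] [OrderTopology β] [DenselyOrdered β]
    {f : α → β} (hf : Antitone f) (hs : Function.Surjective f) : Continuous f :=
  Monotone.continuous_of_surjective (β := βᵒᵈ) hf hs

lemma HasDerivAt.tendsto_sub_div_sub {f : ℝ → ℝ} {f' a : ℝ} (hf : HasDerivAt f f' a)
    (hf' : f' ≠ 0) :
    Tendsto (fun δ => (f (a - δ) - f a) / (f a - f (a + δ))) (𝓝[>] 0) (𝓝 1) := by
  have hleft : Tendsto (fun δ : ℝ => (f (a - δ) - f a) / -δ) (𝓝[>] 0) (𝓝 f') := by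
    have := hf.tendsto_slope_zero_left.comp (tendsto_neg_nhdsGT_neg (a := (0 : ℝ)))
    rw [neg_zero] at this
    refine this.congr fun δ => ?_
    simp [sub_eq_add_neg, div_eq_inv_mul]
  have hright : Tendsto (fun δ : ℝ => (f (a + δ) - f a) / δ) (𝓝[>] 0) (𝓝 f') := by
    simpa [div_eq_inv_mul] using hf.tendsto_slope_zero_right
  rw [← div_self hf']
  refine (hleft.div hright hf').congr' ?_
  filter_upwards [self_mem_nhdsWithin] with δ (hδ : 0 < δ)
  rw [Pi.div_apply, div_neg, neg_div, div_div_div_cancel_right₀ hδ.ne', ← div_neg, neg_sub]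

lemma tendsto_intervalIntegral_of_abs_le_div {ι : Type*} {l : Filter ι} {f : ℝ → ℝ} {C r : ℝ}
    (hr : 0 < r) (hf : ∀ u ∈ Set.Ioc 0 r, |f u| ≤ C / u) {p q : ι → ℝ}
    (hp : Tendsto p l (𝓝[>] 0)) (hq : Tendsto q l (𝓝[>] 0))
    (hpq : Tendsto (fun i => p i / q i) l (𝓝 1)) :
    Tendsto (fun i => ∫ u in p i..q i, f u) l (𝓝 0) := by
  have hqp : Tendsto (fun i => q i / p i) l (𝓝 1) := by
    simpa using hpq.inv₀ one_ne_zero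
  have hbound : Tendsto (fun i => C * (|q i / p i - 1| + |1 - p i / q i|)) l (𝓝 0) := by
    simpa using ((hqp.sub_const 1).abs.add (hpq.const_sub 1).abs).const_mul C
  refine squeeze_zero_norm' ?_ hbound
  filter_upwards [hp (Ioo_mem_nhdsGT hr), hq (Ioo_mem_nhdsGT hr)] with i ⟨hp0, hpr⟩ ⟨hq0, hqr⟩
  have hpt : ∀ u ∈ Set.uIoc (p i) (q i), ‖f u‖ ≤ C * ((p i)⁻¹ + (q i)⁻¹) := by
    rintro u ⟨hu_min, hu_max⟩
    have hu0 : 0 < u := (lt_min hp0 hq0).trans hu_min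
    have hfu : |f u| ≤ C / u := hf u ⟨hu0, hu_max.trans (max_lt hpr hqr).le⟩
    have hC : 0 ≤ C := (div_nonneg_iff.mp ((abs_nonneg _).trans hfu)).elim And.left
      fun h => absurd h.2 (not_le.mpr hu0)
    have hinv : u⁻¹ ≤ (p i)⁻¹ + (q i)⁻¹ := by
      rcases min_choice (p i) (q i) with hmin | hmin <;> rw [hmin] at hu_min
      · linarith [inv_anti₀ hp0 hu_min.le, inv_pos.mpr hq0]
      · linarith [inv_anti₀ hq0 hu_min.le, inv_pos.mpr hp0]
    calc ‖f u‖ ≤ C * u⁻¹ := hfu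
      _ ≤ C * ((p i)⁻¹ + (q i)⁻¹) := mul_le_mul_of_nonneg_left hinv hC
  calc ‖∫ u in p i..q i, f u‖ ≤ C * ((p i)⁻¹ + (q i)⁻¹) * |q i - p i| :=
        intervalIntegral.norm_integral_le_of_norm_le_const hpt
    _ = C * (|q i / p i - 1| + |1 - p i / q i|) := by
        rw [div_sub_one hp0.ne', one_sub_div hq0.ne', abs_div, abs_div, abs_of_pos hp0,
          abs_of_pos hq0]
        ring

lemma tendsto_intervalIntegral_of_comparable_truncations {ι : Type*} {l : Filter ι}
    {K : ℝ → ℝ} {L C c H : ℝ} (hL : 0 < L) (hK : ContinuousOn K (Set.Ioo 0 L))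
    (hK_pole : ∀ u ∈ Set.Ioc 0 (L / 2), |K (L - u)| ≤ C / u)
    (hPV : Tendsto (fun δ => c * ∫ s in δ..(L - δ), K s) (𝓝[>] 0) (𝓝 H))
    {p q : ι → ℝ} (hp : Tendsto p l (𝓝[>] 0)) (hq : Tendsto q l (𝓝[>] 0))
    (hpq : Tendsto (fun i => p i / q i) l (𝓝 1)) :
    Tendsto (fun i => c * ∫ s in q i..(L - p i), K s) l (𝓝 H) := by
  have hsym : Tendsto (fun i => c * ∫ s in q i..(L - q i), K s) l (𝓝 H) := hPV.comp hq
  have herr : Tendsto (fun i => c * ∫ s in (L - q i)..(L - p i), K s) l (𝓝 0) := by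
    simpa [intervalIntegral.integral_comp_sub_left] using
      (tendsto_intervalIntegral_of_abs_le_div (half_pos hL) hK_pole hp hq hpq).const_mul c
  have hKint : ∀ a ∈ Set.Ioo 0 L, ∀ b ∈ Set.Ioo 0 L, IntervalIntegrable K volume a b :=
    fun a ha b hb => (hK.mono (Set.ordConnected_Ioo.uIcc_subset ha hb)).intervalIntegrable
  refine (add_zero H ▸ hsym.add herr).congr' ?_
  filter_upwards [hp (Ioo_mem_nhdsGT (half_pos hL)), hq (Ioo_mem_nhdsGT (half_pos hL))]
    with i ⟨hp0, hpL⟩ ⟨hq0, hqL⟩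
  rw [← mul_add, intervalIntegral.integral_add_adjacent_intervals
    (hKint _ ⟨hq0, by linarith⟩ _ ⟨by linarith, by linarith⟩)
    (hKint _ ⟨by linarith, by linarith⟩ _ ⟨by linarith, by linarith⟩)]

lemma continuousAt_cot_pi_mul_div {L s : ℝ} (hs : s ∈ Set.Ioo 0 L) :
    ContinuousAt cot (π * s / L) := by
  have hL : 0 < L := hs.1.trans hs.2
  refine continuousAt_cot (sin_pos_of_pos_of_lt_pi (by have := hs.1; positivity) ?_).ne'
  rw [div_lt_iff₀ hL]
  exact mul_lt_mul_of_pos_left hs.2 pi_pos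

lemma abs_cot_pi_mul_sub_div_le {L u : ℝ} (hu : u ∈ Set.Ioc 0 (L / 2)) :
    |cot (π * (L - u) / L)| ≤ L / 2 / u := by
  have hL : 0 < L := by linarith [hu.1, hu.2]
  have hbound := abs_cot_le (t := π * u / L) (by have := hu.1; positivity) (by
    rw [div_le_div_iff₀ hL two_pos]; nlinarith [hu.2, pi_pos])
  rw [show π * (L - u) / L = π - π * u / L by field_simp, cot_pi_sub, abs_neg]
  convert hbound using 1
  field_simp

lemma continuousOn_mul_cot_pi_mul_div {g : ℝ → ℝ} (hg : Continuous g) (L : ℝ) :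
    ContinuousOn (fun s => g s * cot (π * s / L)) (Set.Ioo 0 L) := fun s hs =>
  (hg.continuousAt.mul ((continuousAt_cot_pi_mul_div hs).comp (f := fun s => π * s / L)
    (by fun_prop))).continuousWithinAt

lemma Function.Periodic.exists_abs_mul_cot_le {g : ℝ → ℝ} {L : ℝ} (hg : Function.Periodic g L)
    (hL : 0 < L) (hgc : Continuous g) (x : ℝ) :
    ∃ C, ∀ u ∈ Set.Ioc 0 (L / 2), |g (x - (L - u)) * cot (π * (L - u) / L)| ≤ C / u := by
  obtain ⟨M, hM⟩ := (hg.isBounded_of_continuous hL.ne' hgc).exists_norm_le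
  have hM' : ∀ y, |g y| ≤ M := fun y => Real.norm_eq_abs _ ▸ hM _ ⟨y, rfl⟩
  refine ⟨M * (L / 2), fun u hu => ?_⟩
  rw [abs_mul, mul_div_assoc M]
  exact mul_le_mul (hM' _) (abs_cot_pi_mul_sub_div_le hu) (abs_nonneg _)
    ((abs_nonneg _).trans (hM' 0))

lemma periodic_deriv_of_add_eq_sub {h : ℝ → ℝ} {L c : ℝ} (hper : ∀ x, h (x + L) = h x - c) :
    Function.Periodic (deriv h) L := fun x => by
  rw [← deriv_comp_add_const, funext hper, deriv_sub_const]

lemma apply_add_one_of_leftInverse {h φ : ℝ → ℝ} {L : ℝ} (hleft : Function.LeftInverse φ h)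
    (hinv : Function.LeftInverse h φ) (hper : ∀ x, h (x + L) = h x - 1) (β : ℝ) :
    φ (β + 1) = φ β - L := by
  have : h (φ β - L) = β + 1 := by
    have := hper (φ β - L)
    rw [sub_add_cancel, hinv] at this
    linarith
  rw [← this, hleft]

lemma StrictAnti.strictAnti_of_leftInverse {h φ : ℝ → ℝ} (hanti : StrictAnti h)
    (hinv : Function.LeftInverse h φ) : StrictAnti φ := fun a b hab =>
  hanti.lt_iff_gt.mp (by rwa [hinv, hinv])

lemma StrictAnti.tendsto_apply_sub_sub_nhdsGT {φ : ℝ → ℝ} (hφ : StrictAnti φ)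
    (hc : Continuous φ) (α : ℝ) :
    Tendsto (fun δ => φ (α - δ) - φ α) (𝓝[>] 0) (𝓝[>] 0) := by
  refine tendsto_nhdsWithin_iff.mpr ⟨?_, ?_⟩
  · have : Tendsto (fun δ => φ (α - δ) - φ α) (𝓝 0) (𝓝 (φ (α - 0) - φ α)) :=
      ((hc.comp (continuous_sub_left α)).sub continuous_const).tendsto 0
    simpa using this.mono_left nhdsWithin_le_nhds
  · filter_upwards [self_mem_nhdsWithin] with δ (hδ : 0 < δ)
    exact sub_pos.mpr (hφ (by linarith))

lemma StrictAnti.tendsto_sub_apply_add_nhdsGT {φ : ℝ → ℝ} (hφ : StrictAnti φ)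
    (hc : Continuous φ) (α : ℝ) :
    Tendsto (fun δ => φ α - φ (α + δ)) (𝓝[>] 0) (𝓝[>] 0) := by
  refine tendsto_nhdsWithin_iff.mpr ⟨?_, ?_⟩
  · have : Tendsto (fun δ => φ α - φ (α + δ)) (𝓝 0) (𝓝 (φ α - φ (α + 0))) :=
      (continuous_const.sub (hc.comp (continuous_const_add α))).tendsto 0
    simpa using this.mono_left nhdsWithin_le_nhds
  · filter_upwards [self_mem_nhdsWithin] with δ (hδ : 0 < δ)
    exact sub_pos.mpr (hφ (by linarith))

lemma continuousOn_cot_sub_of_apply_add_one {L : ℝ} {φ : ℝ → ℝ} (hφ : StrictAnti φ)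
    (hφc : Continuous φ) (hφ1 : ∀ β, φ (β + 1) = φ β - L) (α : ℝ) :
    ContinuousOn (fun β => cot (π * (φ α - φ β) / L)) (Set.Ioo α (α + 1)) := fun β hβ => by
  have hβL : φ α - φ β < L := by linarith [hφ hβ.2, hφ1 α]
  exact ((continuousAt_cot_pi_mul_div ⟨sub_pos.2 (hφ hβ.1), hβL⟩).comp
    (f := fun β => π * (φ α - φ β) / L) (by fun_prop)).continuousWithinAt

lemma integral_cot_sub_eq_integral_deriv_mul_cot {L x a b : ℝ} {h φ : ℝ → ℝ}
    (hh : ContDiff ℝ 1 h) (hanti : Antitone h) (hleft : Function.LeftInverse φ h)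
    (hinv : Function.LeftInverse h φ)
    (hcont : ContinuousOn (fun β => cot (π * (x - φ β) / L)) (Set.uIcc a b)) :
    ∫ β in a..b, π / L * cot (π * (x - φ β) / L)
      = π / L * ∫ s in (x - φ b)..(x - φ a), deriv h (x - s) * cot (π * s / L) := by
  have hsubst := intervalIntegral.integral_deriv_smul_comp' (a := φ a) (b := φ b)
    (fun y _ => (hh.differentiable one_ne_zero y).hasDerivAt)
    (hh.continuous_deriv le_rfl).continuousOn
    (hcont.mono (by
      simpa only [hinv a, hinv b] using
        (hanti.antitoneOn (Set.uIcc (φ a) (φ b))).image_uIcc_subset))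
  rw [hinv, hinv] at hsubst
  rw [intervalIntegral.integral_const_mul, ← hsubst, ← intervalIntegral.integral_comp_sub_left]
  simp [hleft _]

lemma integral_cot_add_integral_cot_eq {L α δ : ℝ} {h φ : ℝ → ℝ} (hh : ContDiff ℝ 1 h)
    (hanti : StrictAnti h) (hleft : Function.LeftInverse φ h) (hinv : Function.LeftInverse h φ)
    (hφc : Continuous φ) (hφ1 : ∀ β, φ (β + 1) = φ β - L)
    (hδ : 0 < δ) (hδα : δ < α) (hαδ : α + δ < 1) :
    (∫ β in (0 : ℝ)..(α - δ), π / L * cot (π * (φ α - φ β) / L))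
        + ∫ β in (α + δ)..1, π / L * cot (π * (φ α - φ β) / L)
      = -π * ((1 / L) * ∫ s in (φ α - φ (α + δ))..(L - (φ (α - δ) - φ α)),
          deriv h (φ α - s) * cot (π * s / L)) := by
  set g := fun β => π / L * cot (π * (φ α - φ β) / L)
  have hφ := hanti.strictAnti_of_leftInverse hinv
  have hL : 0 < L := by linarith [hφ (lt_add_one α), hφ1 α]
  have hcot := (continuousOn_cot_sub_of_apply_add_one hφ hφc hφ1 α).mono
    (Set.uIcc_of_le (by linarith : α + δ ≤ α - δ + 1) ▸
      Set.Icc_subset_Ioo (by linarith) (by linarith))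
  have hint : ∀ c ∈ Set.uIcc (α + δ) (α - δ + 1), ∀ d ∈ Set.uIcc (α + δ) (α - δ + 1),
      IntervalIntegrable g volume c d := fun c hc d hd =>
    ((continuousOn_const.mul hcot).mono (Set.uIcc_subset_uIcc hc hd)).intervalIntegrable
  have h1 : (1 : ℝ) ∈ Set.uIcc (α + δ) (α - δ + 1) :=
    Set.mem_uIcc_of_le (by linarith) (by linarith)
  have hper : ∀ β, g (β + 1) = g β := fun β => by
    simp only [g, hφ1, show π * (φ α - (φ β - L)) / L = π * (φ α - φ β) / L + π by
      field_simp; ring, cot_add_pi]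
  have hshift : ∫ β in (0 : ℝ)..(α - δ), g β = ∫ β in (1 : ℝ)..(α - δ + 1), g β := by
    simpa only [hper, zero_add] using intervalIntegral.integral_comp_add_right g 1 (a := 0)
  calc (∫ β in (0 : ℝ)..(α - δ), g β) + ∫ β in (α + δ)..1, g β
      = ∫ β in (α + δ)..(α - δ + 1), g β := by
        rw [hshift, add_comm, intervalIntegral.integral_add_adjacent_intervals
          (hint _ Set.left_mem_uIcc _ h1) (hint _ h1 _ Set.right_mem_uIcc)]
    _ = π / L * ∫ s in (φ α - φ (α - δ + 1))..(φ α - φ (α + δ)),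
          deriv h (φ α - s) * cot (π * s / L) :=
        integral_cot_sub_eq_integral_deriv_mul_cot hh hanti.antitone hleft hinv hcot
    _ = _ := by
        rw [hφ1, intervalIntegral.integral_symm]
        ring_nf

/-- Let `h` be `C²` with `h′ < 0` and `h(x+L) = h(x) − 1`, and let `φ` be its
inverse (`h(φ(α)) = α` for all `α`). If `Hh'` denotes the `L`-periodic Hilbert transform of `h′`
(characterized by the principal-value hypothesis `hH`), then for every `α ∈ (0,1)` the
principal-value integral `PV ∫₀¹ (π/L) cot(π(φ(α)−φ(β))/L) dβ` converges to `−π (H h′)(φ(α))`. -/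
theorem stmt_4 (L : ℝ) (hL : 0 < L) (h φ : ℝ → ℝ) (hh : ContDiff ℝ 2 h)
    (hmono : ∀ x, deriv h x < 0) (hper : ∀ x, h (x + L) = h x - 1)
    (hinv : ∀ α : ℝ, h (φ α) = α)
    (Hh' : ℝ → ℝ)
    (hH : ∀ x : ℝ, Tendsto (fun δ : ℝ =>
        (1 / L) * ∫ s in δ..(L - δ), deriv h (x - s) * Real.cot (π * s / L))
      (𝓝[>] (0:ℝ)) (𝓝 (Hh' x))) :
    ∀ α ∈ Set.Ioo (0:ℝ) 1,
      Tendsto (fun δ : ℝ =>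
          (∫ β in (0:ℝ)..(α - δ), (π / L) * Real.cot (π * (φ α - φ β) / L))
          + ∫ β in (α + δ)..1, (π / L) * Real.cot (π * (φ α - φ β) / L))
        (𝓝[>] (0:ℝ)) (𝓝 (-π * Hh' (φ α))) := by
  rintro α ⟨hα0, hα1⟩
  have hh1 : ContDiff ℝ 1 h := hh.of_le one_le_two
  have hanti : StrictAnti h := strictAnti_of_deriv_neg hmono
  have hleft : Function.LeftInverse φ h :=
    Function.LeftInverse.rightInverse_of_injective hinv hanti.injective
  have hφ : StrictAnti φ := hanti.strictAnti_of_leftInverse hinv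
  have hφc : Continuous φ := hφ.antitone.continuous_of_surjective hleft.surjective
  have hφ' : HasDerivAt φ (deriv h (φ α))⁻¹ α := .of_local_left_inverse hφc.continuousAt
    (hh1.differentiable one_ne_zero _).hasDerivAt (hmono _).ne (.of_forall hinv)
  have hh' : Continuous (deriv h) := hh1.continuous_deriv le_rfl
  obtain ⟨C, hpole⟩ := (periodic_deriv_of_add_eq_sub hper).exists_abs_mul_cot_le hL hh' (φ α)
  have hlim := tendsto_intervalIntegral_of_comparable_truncations hL
    (continuousOn_mul_cot_pi_mul_div (hh'.comp (continuous_sub_left (φ α))) L) hpole (hH (φ α))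
    (hφ.tendsto_apply_sub_sub_nhdsGT hφc α)
    (hφ.tendsto_sub_apply_add_nhdsGT hφc α) (hφ'.tendsto_sub_div_sub (inv_ne_zero (hmono _).ne))
  refine (hlim.const_mul (-π)).congr' ?_
  filter_upwards [Ioo_mem_nhdsGT (lt_min hα0 (sub_pos.2 hα1))] with δ ⟨hδ, hδα⟩
  exact (integral_cot_add_integral_cot_eq hh1 hanti hleft hinv hφc
    (apply_add_one_of_leftInverse hleft hinv hper) hδ (hδα.trans_le (min_le_left _ _))
    (by linarith [hδα.trans_le (min_le_right _ _)])).symm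
end

section
/- Fix an integer N ≥ 2, L > 0, a := 1/N. Along any C¹ solution x(t) of the step-flow ODE system (with x_{i+N}(t) = x_i(t) + L and x_i(t) < x_{i+1}(t)), the energy identity (d/dt) E^N(x(t)) = − Σ_{i=1}^{N} (f_{i+1}(t) − f_i(t))² / (x_{i+1}(t) − x_i(t)) holds for all t, where f_{N+1} := f₁ by periodicity. In particular E^N(x(t)) is nonincreasing in t. -/
open Real Filter Topology

/-- The chemical potential `f_i` of a (periodic) step configuration `c : ℤ → ℝ`
(with `c (i+N) = c i + L`), `a := 1/N`; the lattice sum is over the period window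
`j ∈ {i+1, …, i+N−1}`, which by `π`-periodicity of `cot` agrees with `Σ_{j=1,j≠i}^N`
and makes `f_{i+N} = f_i` (so in particular `f_{N+1} = f_1`) manifest. -/
noncomputable def fchem (N : ℕ) (L : ℝ) (c : ℤ → ℝ) (i : ℤ) : ℝ :=
  -(2 * π * (N:ℝ)⁻¹ / L ^ 2) *
      (∑ j ∈ Finset.Ico (i + 1) (i + (N:ℤ)), Real.cot (π * (c j - c i) / L))
    + (1 / (c (i + 1) - c i) - 1 / (c i - c (i - 1)))
    + ((N:ℝ)⁻¹ ^ 2 / (c (i + 1) - c i) ^ 3 - (N:ℝ)⁻¹ ^ 2 / (c i - c (i - 1)) ^ 3)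

/-- The right-hand side of the step-flow ODE system, `a = 1/N`. -/
noncomputable def Fvel (N : ℕ) (L : ℝ) (c : ℤ → ℝ) (i : ℤ) : ℝ :=
  (N:ℝ) * ((fchem N L c (i + 1) - fchem N L c i) / (c (i + 1) - c i)
    - (fchem N L c i - fchem N L c (i - 1)) / (c i - c (i - 1)))

/-- The discrete energy `E^N`, `a = 1/N`, with convention `c_{N+1} = c_1 + L`. -/
noncomputable def energyN (N : ℕ) (L : ℝ) (c : ℤ → ℝ) : ℝ :=
  (N:ℝ)⁻¹ ^ 2 * ∑ i ∈ Finset.Icc (1:ℤ) (N:ℤ), ∑ j ∈ Finset.Ioc i (N:ℤ),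
      (2 / L) * Real.log |Real.sin (π * (c j - c i) / L)|
    + (N:ℝ)⁻¹ * ∑ i ∈ Finset.Icc (1:ℤ) (N:ℤ),
      (-Real.log ((c (i + 1) - c i) * (N:ℝ)) + ((N:ℝ)⁻¹ ^ 2 / 2) / (c (i + 1) - c i) ^ 2)

/-!
The chemical potential is the gradient of the energy, `f_k = N · ∂E/∂x_k`. Differentiating the
pair term gives `cot` of the pair distances; since `cot` is odd and `π`-periodic, the sum over
pairs `i < j` of one period regroups into the window sums `Σ_{j=k+1}^{k+N-1}` in `f_k`, and a
periodic summation by parts turns the nearest-neighbour term into the differences of `1/d + a²/d³`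
in `f_k`. So `dE/dt = a Σ_k f_k ẋ_k`. The flow is `ẋ_k = N (h_k - h_{k-1})` with
`h_k = (f_{k+1} - f_k)/(x_{k+1} - x_k)`, and a second periodic summation by parts gives
`dE/dt = -Σ_k (f_{k+1} - f_k) h_k ≤ 0`.
-/

namespace Real

theorem cot_neg (x : ℝ) : cot (-x) = -cot x := by
  simp [cot_eq_cos_div_sin, div_neg]

theorem cot_periodic : Function.Periodic cot π := fun x => by
  simp [cot_eq_cos_div_sin, sin_add_pi, cos_add_pi]

end Real

theorem HasDerivAt.neg_log_mul_add_div_sq {d : ℝ → ℝ} {d' t b m : ℝ}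
    (hd : HasDerivAt d d' t) (hdt : d t ≠ 0) (hm : m ≠ 0) :
    HasDerivAt (fun s => -Real.log (d s * m) + b / 2 / d s ^ 2)
      ((-(1 / d t) - b / d t ^ 3) * d') t := by
  have hlog := (hd.mul_const m).log (mul_ne_zero hdt hm)
  have hinv := (hasDerivAt_const t (b / 2)).div (hd.pow 2) (pow_ne_zero 2 hdt)
  refine (hlog.neg.add hinv).congr_deriv ?_
  simp only [Pi.pow_apply]
  field_simp
  ring

theorem HasDerivAt.log_abs_sin {u : ℝ → ℝ} {u' t : ℝ} (hu : HasDerivAt u u' t)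
    (hsin : Real.sin (u t) ≠ 0) :
    HasDerivAt (fun s => Real.log |Real.sin (u s)|) (Real.cot (u t) * u') t := by
  simp only [Real.log_abs]
  convert hu.sin.log hsin using 1
  rw [Real.cot_eq_cos_div_sin]
  ring

namespace Function.Periodic

open Finset

variable {M : Type*} {G : ℤ → M} {n : ℤ}

theorem sum_Ico_add_period [AddCommMonoid M] (hG : Periodic G n) {k : ℤ} (h0 : 0 ≤ k)
    (hk : k ≤ n) : ∑ j ∈ Ico k (k + n), G j = ∑ j ∈ Ico 0 n, G j := by
  have htail : ∑ j ∈ Ico n (k + n), G j = ∑ j ∈ Ico 0 k, G j := by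
    have hshift := sum_Ico_add' G 0 k n
    rw [zero_add] at hshift
    rw [← hshift]
    exact sum_congr rfl fun j _ => hG j
  rw [← Ico_union_Ico_eq_Ico hk (by omega : n ≤ k + n),
    sum_union (Ico_disjoint_Ico_consecutive _ _ _), ← Ico_union_Ico_eq_Ico h0 hk,
    sum_union (Ico_disjoint_Ico_consecutive _ _ _), htail, add_comm]

theorem sum_Icc_one_eq_sum_Ico_zero [AddCommMonoid M] (hG : Periodic G n) (hn : 1 ≤ n) :
    ∑ j ∈ Icc 1 n, G j = ∑ j ∈ Ico 0 n, G j := by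
  rw [← Ico_add_one_right_eq_Icc, add_comm n, hG.sum_Ico_add_period zero_le_one hn]

theorem sum_Icc_sub_one [AddCommMonoid M] (hG : Periodic G n) (hn : 1 ≤ n) :
    ∑ k ∈ Icc 1 n, G (k - 1) = ∑ k ∈ Icc 1 n, G k := by
  have hshift := sum_Ico_add' (fun k => G (k - 1)) 0 n 1
  simp only [add_sub_cancel_right, zero_add] at hshift
  rw [hG.sum_Icc_one_eq_sum_Ico_zero hn, ← Ico_add_one_right_eq_Icc, ← hshift]

theorem sum_Ico_add_one_add_period [AddCancelCommMonoid M] (hG : Periodic G n) {k : ℤ}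
    (hk : k ∈ Icc 1 n) :
    ∑ j ∈ Ico (k + 1) (k + n), G j = ∑ j ∈ (Icc 1 n).erase k, G j := by
  obtain ⟨hk1, hkn⟩ := mem_Icc.mp hk
  have hperiod := hG.sum_Ico_add_period (by omega : 0 ≤ k) hkn
  rw [← insert_Ico_add_one_left_eq_Ico (by omega : k < k + n), sum_insert (by simp),
    ← hG.sum_Icc_one_eq_sum_Ico_zero (by omega), ← add_sum_erase _ _ hk] at hperiod
  exact add_left_cancel hperiod

theorem sum_Icc_mul_sub_pred [CommRing M] {u w : ℤ → M} (hu : Periodic u n) (hw : Periodic w n)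
    (hn : 1 ≤ n) :
    ∑ k ∈ Icc 1 n, u k * (w k - w (k - 1)) = -∑ k ∈ Icc 1 n, (u (k + 1) - u k) * w k := by
  have hshift := ((hu.add_const 1).mul hw).sum_Icc_sub_one hn
  simp only [Pi.mul_apply, sub_add_cancel] at hshift
  simp only [mul_sub, sub_mul, sum_sub_distrib, hshift]
  ring

end Function.Periodic

open Finset

theorem sum_sum_lt_mul_sub_of_antisymm {ι R : Type*} [LinearOrder ι] [CommRing R]
    (s : Finset ι) (φ : ι → ι → R) (hφ : ∀ i j, φ j i = -φ i j) (v : ι → R) :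
    ∑ i ∈ s, ∑ j ∈ s with i < j, φ i j * (v j - v i)
      = -∑ k ∈ s, v k * ∑ j ∈ s.erase k, φ k j := by
  have hsplit : ∀ k ∈ s, ∑ j ∈ s.erase k, φ k j
      = ∑ j ∈ s with j < k, φ k j + ∑ j ∈ s with k < j, φ k j := by
    intro k _
    rw [← sum_union (disjoint_filter.mpr fun j _ h1 h2 => lt_asymm h1 h2)]
    congr 1
    ext j
    simp only [mem_erase, mem_union, mem_filter, ne_iff_lt_or_gt]
    tauto
  calc ∑ i ∈ s, ∑ j ∈ s with i < j, φ i j * (v j - v i)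
      = ∑ j ∈ s, ∑ i ∈ s with i < j, φ i j * v j
          - ∑ i ∈ s, ∑ j ∈ s with i < j, φ i j * v i := by
        simp only [mul_sub, sum_sub_distrib]
        congr 1
        exact sum_comm' fun _ _ => by simp only [mem_filter]; tauto
    _ = ∑ k ∈ s,
          (-(v k * ∑ j ∈ s with j < k, φ k j) - v k * ∑ j ∈ s with k < j, φ k j) := by
        rw [sum_sub_distrib]
        congr 1 <;> refine sum_congr rfl fun k _ => ?_
        · rw [mul_sum, ← sum_neg_distrib]
          exact sum_congr rfl fun j _ => by rw [hφ]; ring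
        · rw [mul_sum]
          exact sum_congr rfl fun j _ => by ring
    _ = -∑ k ∈ s, v k * ∑ j ∈ s.erase k, φ k j := by
        rw [← sum_neg_distrib]
        exact sum_congr rfl fun k hk => by rw [hsplit k hk]; ring

section StepConfiguration

variable {N : ℕ} {L : ℝ} {c : ℤ → ℝ}

theorem sub_add_period (hc : ∀ j : ℤ, c (j + N) = c j + L) (j k : ℤ) :
    c (j + N) - c (k + N) = c j - c k := by
  rw [hc, hc]; ring

theorem periodic_sub_add (hc : ∀ j : ℤ, c (j + N) = c j + L) (m : ℤ) :
    Function.Periodic (fun k => c (k + m) - c k) N := fun k => by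
  simp only [add_right_comm k (N : ℤ) m, sub_add_period hc]

theorem periodic_cot_sub (hL : L ≠ 0) (hc : ∀ j : ℤ, c (j + N) = c j + L) (k : ℤ) :
    Function.Periodic (fun j => Real.cot (π * (c j - c k) / L)) N := fun j => by
  simp only [hc]
  rw [show π * (c j + L - c k) / L = π * (c j - c k) / L + π by field_simp; ring]
  exact Real.cot_periodic _

theorem sin_pi_mul_sub_div_ne_zero (hL : 0 < L) (hc : ∀ j : ℤ, c (j + N) = c j + L)
    (hmono : StrictMono c) {i j : ℤ} (hij : i < j) (hji : j < i + N) :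
    Real.sin (π * (c j - c i) / L) ≠ 0 := by
  have hlt : c j < c i + L := hc i ▸ hmono hji
  refine (Real.sin_pos_of_pos_of_lt_pi ?_ ?_).ne'
  · exact div_pos (mul_pos pi_pos (sub_pos.mpr (hmono hij))) hL
  · rw [div_lt_iff₀ hL]
    nlinarith [pi_pos]

theorem fchem_periodic (hc : ∀ j : ℤ, c (j + N) = c j + L) :
    Function.Periodic (fchem N L c) N := fun i => by
  have hwindow : ∑ j ∈ Ico (i + N + 1) (i + N + N), Real.cot (π * (c j - c (i + N)) / L)
      = ∑ j ∈ Ico (i + 1) (i + N), Real.cot (π * (c j - c i) / L) := by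
    rw [add_right_comm i (N : ℤ) 1, ← sum_Ico_add']
    simp only [sub_add_period hc]
  unfold fchem
  rw [hwindow, add_right_comm i (N : ℤ) 1, add_sub_right_comm i (N : ℤ) 1,
    sub_add_period hc, sub_add_period hc]

theorem Fvel_periodic (hc : ∀ j : ℤ, c (j + N) = c j + L) :
    Function.Periodic (Fvel N L c) N := fun i => by
  have hf := fchem_periodic hc
  unfold Fvel
  rw [add_right_comm i (N : ℤ) 1, add_sub_right_comm i (N : ℤ) 1, hf, hf, hf,
    sub_add_period hc, sub_add_period hc]

/-- The derivative of `energyN N L` at `c` in the direction `v`. -/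
noncomputable def energyVariation (N : ℕ) (L : ℝ) (c v : ℤ → ℝ) : ℝ :=
  (N : ℝ)⁻¹ ^ 2 * ∑ i ∈ Icc (1 : ℤ) N, ∑ j ∈ Ioc i (N : ℤ),
      2 / L * (Real.cot (π * (c j - c i) / L) * (π * (v j - v i) / L))
    + (N : ℝ)⁻¹ * ∑ i ∈ Icc (1 : ℤ) N,
      (-(1 / (c (i + 1) - c i)) - (N : ℝ)⁻¹ ^ 2 / (c (i + 1) - c i) ^ 3) * (v (i + 1) - v i)

theorem hasDerivAt_energyN (hL : 0 < L) {x : ℝ → ℤ → ℝ} {v : ℤ → ℝ} {t : ℝ}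
    (hper : ∀ i : ℤ, x t (i + N) = x t i + L) (hmono : StrictMono (x t))
    (hx : ∀ i : ℤ, HasDerivAt (fun s => x s i) (v i) t) :
    HasDerivAt (fun s => energyN N L (x s)) (energyVariation N L (x t) v) t := by
  have hpair : ∀ i ∈ Icc (1 : ℤ) N, ∀ j ∈ Ioc i (N : ℤ),
      HasDerivAt (fun s => 2 / L * Real.log |Real.sin (π * (x s j - x s i) / L)|)
        (2 / L * (Real.cot (π * (x t j - x t i) / L) * (π * (v j - v i) / L))) t := by
    intro i hi j hj
    obtain ⟨hij, hjN⟩ := mem_Ioc.mp hj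
    have hsin := sin_pi_mul_sub_div_ne_zero hL hper hmono hij (by grind)
    exact ((((hx j).sub (hx i)).const_mul π).div_const L |>.log_abs_sin hsin).const_mul _
  have hstep : ∀ i ∈ Icc (1 : ℤ) N,
      HasDerivAt (fun s => -Real.log ((x s (i + 1) - x s i) * N)
          + (N : ℝ)⁻¹ ^ 2 / 2 / (x s (i + 1) - x s i) ^ 2)
        ((-(1 / (x t (i + 1) - x t i)) - (N : ℝ)⁻¹ ^ 2 / (x t (i + 1) - x t i) ^ 3)
          * (v (i + 1) - v i)) t := by
    intro i hi
    have hN : (N : ℝ) ≠ 0 := by norm_cast; grind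
    exact ((hx (i + 1)).sub (hx i)).neg_log_mul_add_div_sq
      (sub_pos.mpr (hmono (lt_add_one i))).ne' hN
  exact ((HasDerivAt.fun_sum fun i hi => HasDerivAt.fun_sum fun j hj => hpair i hi j hj)
    |>.const_mul _).add ((HasDerivAt.fun_sum hstep).const_mul _)

theorem sum_sum_cot_mul_sub (hL : L ≠ 0) (hc : ∀ j : ℤ, c (j + N) = c j + L)
    (v : ℤ → ℝ) :
    ∑ i ∈ Icc (1 : ℤ) N, ∑ j ∈ Ioc i (N : ℤ),
        Real.cot (π * (c j - c i) / L) * (v j - v i)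
      = -∑ k ∈ Icc (1 : ℤ) N,
          v k * ∑ j ∈ Ico (k + 1) (k + N), Real.cot (π * (c j - c k) / L) := by
  have hIoc : ∀ i ∈ Icc (1 : ℤ) N, {j ∈ Icc (1 : ℤ) N | i < j} = Ioc i (N : ℤ) := by
    intro i hi
    ext j
    simp only [mem_filter, mem_Icc, mem_Ioc] at hi ⊢
    omega
  have hcot_antisymm : ∀ i j : ℤ,
      Real.cot (π * (c i - c j) / L) = -Real.cot (π * (c j - c i) / L) := fun i j => by
    rw [show π * (c i - c j) / L = -(π * (c j - c i) / L) by ring, Real.cot_neg]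
  calc _ = ∑ i ∈ Icc (1 : ℤ) N, ∑ j ∈ Icc (1 : ℤ) N with i < j,
          Real.cot (π * (c j - c i) / L) * (v j - v i) :=
        sum_congr rfl fun i hi => by rw [hIoc i hi]
    _ = -∑ k ∈ Icc (1 : ℤ) N,
          v k * ∑ j ∈ (Icc (1 : ℤ) N).erase k, Real.cot (π * (c j - c k) / L) :=
        sum_sum_lt_mul_sub_of_antisymm _ _ hcot_antisymm v
    _ = _ := by
        congr 1
        refine sum_congr rfl fun k hk => ?_
        rw [(periodic_cot_sub hL hc k).sum_Ico_add_one_add_period hk]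

theorem energyVariation_eq (hN : (1 : ℤ) ≤ N) (hL : L ≠ 0)
    (hc : ∀ j : ℤ, c (j + N) = c j + L) {v : ℤ → ℝ} (hv : Function.Periodic v N) :
    energyVariation N L c v = (N : ℝ)⁻¹ * ∑ k ∈ Icc (1 : ℤ) N, fchem N L c k * v k := by
  set g : ℤ → ℝ := fun k =>
    -(1 / (c (k + 1) - c k)) - (N : ℝ)⁻¹ ^ 2 / (c (k + 1) - c k) ^ 3
  have hpair : ∑ i ∈ Icc (1 : ℤ) N, ∑ j ∈ Ioc i (N : ℤ),
      2 / L * (Real.cot (π * (c j - c i) / L) * (π * (v j - v i) / L))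
        = 2 * π / L ^ 2 * ∑ i ∈ Icc (1 : ℤ) N, ∑ j ∈ Ioc i (N : ℤ),
          Real.cot (π * (c j - c i) / L) * (v j - v i) := by
    simp only [mul_sum]
    exact sum_congr rfl fun i _ => sum_congr rfl fun j _ => by field_simp
  have hstep : ∑ i ∈ Icc (1 : ℤ) N, g i * (v (i + 1) - v i)
      = -∑ k ∈ Icc (1 : ℤ) N, v k * (g k - g (k - 1)) := by
    have hg : Function.Periodic g N :=
      (periodic_sub_add hc 1).comp fun d => -(1 / d) - (N : ℝ)⁻¹ ^ 2 / d ^ 3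
    rw [hv.sum_Icc_mul_sub_pred hg hN, neg_neg]
    exact sum_congr rfl fun k _ => by ring
  have hgrad : ∑ k ∈ Icc (1 : ℤ) N, fchem N L c k * v k
      = -(2 * π * (N : ℝ)⁻¹ / L ^ 2) * ∑ k ∈ Icc (1 : ℤ) N,
          v k * ∑ j ∈ Ico (k + 1) (k + N), Real.cot (π * (c j - c k) / L)
        - ∑ k ∈ Icc (1 : ℤ) N, v k * (g k - g (k - 1)) := by
    rw [mul_sum, ← sum_sub_distrib]
    exact sum_congr rfl fun k _ => by simp only [fchem, g, sub_add_cancel]; ring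
  unfold energyVariation
  rw [hpair, sum_sum_cot_mul_sub hL hc v, hstep, hgrad]
  ring

theorem sum_fchem_mul_Fvel (hN : (1 : ℤ) ≤ N) (hc : ∀ j : ℤ, c (j + N) = c j + L) :
    (N : ℝ)⁻¹ * ∑ k ∈ Icc (1 : ℤ) N, fchem N L c k * Fvel N L c k
      = -∑ k ∈ Icc (1 : ℤ) N,
          (fchem N L c (k + 1) - fchem N L c k) ^ 2 / (c (k + 1) - c k) := by
  set h : ℤ → ℝ := fun k => (fchem N L c (k + 1) - fchem N L c k) / (c (k + 1) - c k)
  have hf := fchem_periodic hc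
  have hh : Function.Periodic h N := fun k => by
    simp only [h, add_right_comm k (N : ℤ) 1, hf _, sub_add_period hc]
  have hN0 : (N : ℝ) ≠ 0 := by norm_cast; omega
  calc (N : ℝ)⁻¹ * ∑ k ∈ Icc (1 : ℤ) N, fchem N L c k * Fvel N L c k
      = ∑ k ∈ Icc (1 : ℤ) N, fchem N L c k * (h k - h (k - 1)) := by
        rw [mul_sum]
        refine sum_congr rfl fun k _ => ?_
        simp only [Fvel, h, sub_add_cancel]
        field_simp
    _ = -∑ k ∈ Icc (1 : ℤ) N, (fchem N L c (k + 1) - fchem N L c k) * h k :=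
        hf.sum_Icc_mul_sub_pred hh hN
    _ = _ := by
        congr 1
        exact sum_congr rfl fun k _ => by ring

end StepConfiguration

/-- The energy identity along any `C¹` solution of the step-flow ODE system:
`(d/dt)E^N(x(t)) = −Σ_{i=1}^N (f_{i+1}−f_i)²/(x_{i+1}−x_i)`; in particular `E^N(x(t))` is
nonincreasing in `t`. -/
theorem stmt_9 (N : ℕ) (hN : 2 ≤ N) (L : ℝ) (hL : 0 < L) (x : ℝ → ℤ → ℝ)
    (hper : ∀ t : ℝ, ∀ i : ℤ, x t (i + (N:ℤ)) = x t i + L)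
    (hmono : ∀ t : ℝ, ∀ i : ℤ, x t i < x t (i + 1))
    (hode : ∀ i : ℤ, ∀ t : ℝ, HasDerivAt (fun s => x s i) (Fvel N L (x t) i) t) :
    (∀ t : ℝ, HasDerivAt (fun s => energyN N L (x s))
        (-(∑ i ∈ Finset.Icc (1:ℤ) (N:ℤ),
          (fchem N L (x t) (i + 1) - fchem N L (x t) i) ^ 2 / (x t (i + 1) - x t i))) t) ∧
    (∀ s t : ℝ, s ≤ t → energyN N L (x t) ≤ energyN N L (x s)) := by
  have hN1 : (1 : ℤ) ≤ N := by omega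
  have hderiv : ∀ t : ℝ, HasDerivAt (fun s => energyN N L (x s))
      (-(∑ i ∈ Finset.Icc (1:ℤ) (N:ℤ),
        (fchem N L (x t) (i + 1) - fchem N L (x t) i) ^ 2 / (x t (i + 1) - x t i))) t := by
    intro t
    have hE := hasDerivAt_energyN hL (hper t) (strictMono_int_of_lt_succ (hmono t)) (hode · t)
    rwa [energyVariation_eq hN1 hL.ne' (hper t) (Fvel_periodic (hper t)),
      sum_fchem_mul_Fvel hN1 (hper t)] at hE
  refine ⟨hderiv, fun s t hst => antitone_of_deriv_nonpos
    (fun u => (hderiv u).differentiableAt) (fun u => ?_) hst⟩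
  rw [(hderiv u).deriv, neg_nonpos]
  exact sum_nonneg fun i _ => div_nonneg (sq_nonneg _) (sub_pos.mpr (hmono u i)).le
end

section
/- Fix an integer N ≥ 2, L > 0, a := 1/N. Regard the discrete energy E^N as a smooth function of (x₁, …, x_N) on the open set { x ∈ ℝ^N : x₁ < x₂ < ⋯ < x_N < x₁ + L }, with the conventions x₀ := x_N − L and x_{N+1} := x₁ + L. Then for every i ∈ {1, …, N}, ∂E^N/∂x_i = a · f_i, where f_i := −(2πa/L²)·Σ_{j=1, j≠i}^{N} cot(π(x_j−x_i)/L) + (1/(x_{i+1}−x_i) − 1/(x_i−x_{i−1})) + (a²/(x_{i+1}−x_i)³ − a²/(x_i−x_{i−1})³). Hence the step-flow ODE is the gradient flow structure dx_i/dt = (1/a)·[(f_{i+1}−f_i)/(x_{i+1}−x_i) − (f_i−f_{i−1})/(x_i−x_{i−1})] with f_i = (1/a)·∂E^N/∂x_i. -/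
open Real Filter Topology

/-- Periodic extension of a vector `(v 1, …, v N)` to a configuration on `ℤ`, implementing the
conventions `x₀ = x_N − L`, `x_{N+1} = x₁ + L` (and more generally `x_{i+N} = x_i + L`):
for `i ∈ {1, …, N}` one has `extPer N L v i = v i`. -/
noncomputable def extPer (N : ℕ) (L : ℝ) (v : ℤ → ℝ) (i : ℤ) : ℝ :=
  v ((i - 1) % (N:ℤ) + 1) + L * (((i - 1) / (N:ℤ) : ℤ) : ℝ)

/-!
Moving `x_i` moves the whole periodic orbit `x_{i+kN} = x_i + kL`, so along the line
`s ↦ extPer N L (update v i s)` every coordinate has velocity `1` or `0`, namely the periodic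
extension of the `i`-th unit vector. The chain rule then gives `(2π/L²) cot` from the pair terms
containing `i` and `-1/d - a²/d³` from the two gaps adjacent to `x_i`. Two periodicity facts
identify the result with `a · f_i`: the gap `x_{N+1} - x_N` equals `x_1 - x_0`, and since `cot` is
`π`-periodic and `x_{j+N} = x_j + L`, the window `{i+1, …, i+N-1}` in `f_i` sums the same
cotangents as the pairs `{j, i}` with `j ∈ {1, …, N}`.
-/

open Finset

lemma Real.cot_neg_s10 (x : ℝ) : cot (-x) = -cot x := by
  simp [cot_eq_cos_div_sin, div_neg]

lemma Real.cot_add_pi_s10 (x : ℝ) : cot (x + π) = cot x := by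
  simp [cot_eq_cos_div_sin, sin_add, cos_add, neg_div_neg_eq]

noncomputable def pairEnergy (L w : ℝ) : ℝ := (2 / L) * Real.log |Real.sin (π * w / L)|

noncomputable def stepEnergy (N : ℕ) (d : ℝ) : ℝ := -Real.log (d * N) + ((N:ℝ)⁻¹ ^ 2 / 2) / d ^ 2

lemma energyN_eq (N : ℕ) (L : ℝ) (c : ℤ → ℝ) :
    energyN N L c = (N:ℝ)⁻¹ ^ 2 * ∑ p ∈ Icc (1:ℤ) N, ∑ q ∈ Ioc p (N:ℤ), pairEnergy L (c q - c p)
      + (N:ℝ)⁻¹ * ∑ p ∈ Icc (1:ℤ) N, stepEnergy N (c (p + 1) - c p) :=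
  rfl

lemma hasDerivAt_pairEnergy {L w : ℝ} (hw : sin (π * w / L) ≠ 0) :
    HasDerivAt (pairEnergy L) (2 * π / L ^ 2 * cot (π * w / L)) w := by
  have hlin : HasDerivAt (fun w => π * w / L) (π / L) w := by
    simpa using ((hasDerivAt_id w).const_mul π).div_const L
  have hpair : pairEnergy L = fun w => 2 / L * Real.log (sin (π * w / L)) := by
    ext x
    rw [pairEnergy, Real.log_abs]
  rw [hpair]
  refine ((hlin.sin.log hw).const_mul (2 / L)).congr_deriv ?_
  rw [cot_eq_cos_div_sin]
  field_simp

lemma hasDerivAt_stepEnergy {N : ℕ} {d : ℝ} (hN : N ≠ 0) (hd : d ≠ 0) :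
    HasDerivAt (stepEnergy N) (-(1 / d) - (N:ℝ)⁻¹ ^ 2 / d ^ 3) d := by
  have hlog : HasDerivAt (fun x => Real.log (x * N)) (1 / d) d := by
    have := (hasDerivAt_mul_const (N:ℝ)).log (mul_ne_zero hd (Nat.cast_ne_zero.2 hN))
    refine this.congr_deriv ?_
    field_simp
  have hsq : HasDerivAt (fun x => ((N:ℝ)⁻¹ ^ 2 / 2) / x ^ 2) (-((N:ℝ)⁻¹ ^ 2 / d ^ 3)) d := by
    have := ((hasDerivAt_pow 2 d).inv (pow_ne_zero 2 hd)).const_mul ((N:ℝ)⁻¹ ^ 2 / 2)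
    simp only [Pi.inv_apply, ← div_eq_mul_inv] at this
    refine this.congr_deriv ?_
    field_simp
    norm_num
  exact (hlog.neg.add hsq).congr_deriv (by ring)

theorem hasDerivAt_energyN_s10 {N : ℕ} {L s₀ : ℝ} {γ : ℝ → ℤ → ℝ} {γ' : ℤ → ℝ}
    (hγ : ∀ k, HasDerivAt (fun s => γ s k) (γ' k) s₀)
    (hsin : ∀ p ∈ Icc (1:ℤ) N, ∀ q ∈ Ioc p (N:ℤ), sin (π * (γ s₀ q - γ s₀ p) / L) ≠ 0)
    (hgap : ∀ p ∈ Icc (1:ℤ) N, γ s₀ (p + 1) - γ s₀ p ≠ 0) :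
    HasDerivAt (fun s => energyN N L (γ s))
      ((N:ℝ)⁻¹ ^ 2 * ∑ p ∈ Icc (1:ℤ) N, ∑ q ∈ Ioc p (N:ℤ),
          2 * π / L ^ 2 * cot (π * (γ s₀ q - γ s₀ p) / L) * (γ' q - γ' p)
        + (N:ℝ)⁻¹ * ∑ p ∈ Icc (1:ℤ) N,
          (-(1 / (γ s₀ (p + 1) - γ s₀ p)) - (N:ℝ)⁻¹ ^ 2 / (γ s₀ (p + 1) - γ s₀ p) ^ 3)
            * (γ' (p + 1) - γ' p)) s₀ := by
  simp only [energyN_eq]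
  refine (HasDerivAt.const_mul _ (HasDerivAt.fun_sum fun p hp => HasDerivAt.fun_sum
    fun q hq => ?_)).add (HasDerivAt.const_mul _ (HasDerivAt.fun_sum fun p hp => ?_))
  · exact ((hasDerivAt_pairEnergy (hsin p hp q hq)).comp s₀ ((hγ q).fun_sub (hγ p)) :)
  · have hN : N ≠ 0 := by have := mem_Icc.1 hp; omega
    exact ((hasDerivAt_stepEnergy hN (hgap p hp)).comp s₀ ((hγ (p + 1)).fun_sub (hγ p)) :)

lemma extPer_update (N : ℕ) (L : ℝ) (v : ℤ → ℝ) (i : ℤ) (s : ℝ) (k : ℤ) :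
    extPer N L (Function.update v i s) k
      = extPer N L v k + (s - v i) * extPer N 0 (Pi.single i 1) k := by
  simp only [extPer, Function.update_apply, Pi.single_apply]
  split_ifs with h
  · subst h; ring
  · ring

lemma hasDerivAt_extPer_update (N : ℕ) (L : ℝ) (v : ℤ → ℝ) (i k : ℤ) (x : ℝ) :
    HasDerivAt (fun s => extPer N L (Function.update v i s) k)
      (extPer N 0 (Pi.single i 1) k) x := by
  simp only [extPer_update]
  simpa using (((hasDerivAt_id x).sub_const (v i)).mul_const
    (extPer N 0 (Pi.single i 1) k)).const_add (extPer N L v k)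

lemma extPer_of_mem_Icc {N : ℕ} (L : ℝ) (u : ℤ → ℝ) {k : ℤ} (hk : k ∈ Icc (1:ℤ) N) :
    extPer N L u k = u k := by
  rw [mem_Icc] at hk
  have h₁ : (k - 1) % (N:ℤ) = k - 1 := Int.emod_eq_of_lt (by omega) (by omega)
  have h₂ : (k - 1) / (N:ℤ) = 0 := Int.ediv_eq_zero_of_lt (by omega) (by omega)
  simp [extPer, h₁, h₂]

lemma extPer_add_period {N : ℕ} (hN : N ≠ 0) (L : ℝ) (u : ℤ → ℝ) (k : ℤ) :
    extPer N L u (k + N) = extPer N L u k + L := by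
  have e : k + N - 1 = k - 1 + 1 * N := by ring
  simp only [extPer, e, Int.add_mul_emod_self_right,
    Int.add_mul_ediv_right _ _ (Int.natCast_ne_zero.2 hN)]
  push_cast
  ring

lemma periodic_extPer_add_sub {N : ℕ} (hN : N ≠ 0) (L : ℝ) (u : ℤ → ℝ) (m : ℤ) :
    Function.Periodic (fun k => extPer N L u (k + m) - extPer N L u k) N := fun k => by
  dsimp only
  rw [add_right_comm, extPer_add_period hN, extPer_add_period hN]
  ring

lemma periodic_cot_extPer_sub {N : ℕ} (hN : N ≠ 0) {L : ℝ} (hL : L ≠ 0) (u : ℤ → ℝ) (x : ℝ) :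
    Function.Periodic (fun k => cot (π * (extPer N L u k - x) / L)) N := fun k => by
  dsimp only
  rw [extPer_add_period hN, ← Real.cot_add_pi_s10 (π * (extPer N L u k - x) / L)]
  congr 1
  field_simp
  ring

lemma sum_mul_eq_ite_of_eqOn_indicator {ι M : Type*} [DecidableEq ι] [NonAssocSemiring M]
    {s : Finset ι} {f δ : ι → M} {i : ι} (hδ : ∀ k ∈ s, δ k = if k = i then 1 else 0) :
    ∑ k ∈ s, f k * δ k = if i ∈ s then f i else 0 := by
  rw [← sum_ite_eq' s i f]
  exact sum_congr rfl fun k hk => by rw [hδ k hk, mul_ite, mul_one, mul_zero]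

lemma sum_Icc_sum_Ioc_mul_sub_of_eqOn_indicator {M : Type*} [Ring M] (g : ℤ → ℤ → M)
    {δ : ℤ → M} {a b i : ℤ} (hi : i ∈ Icc a b)
    (hδ : ∀ k ∈ Icc a b, δ k = if k = i then 1 else 0) :
    ∑ p ∈ Icc a b, ∑ q ∈ Ioc p b, g p q * (δ q - δ p)
      = ∑ p ∈ Ico a i, g p i - ∑ q ∈ Ioc i b, g i q := by
  have hsub : ∀ p ∈ Icc a b, Ioc p b ⊆ Icc a b := fun p hp => Ioc_subset_Icc_self.trans
    (Icc_subset_Icc (mem_Icc.1 hp).1 le_rfl)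
  simp only [mul_sub, sum_sub_distrib, ← sum_mul]
  rw [sum_congr rfl fun p hp => sum_mul_eq_ite_of_eqOn_indicator fun k hk => hδ k (hsub p hp hk),
    sum_mul_eq_ite_of_eqOn_indicator hδ, if_pos hi, sum_ite, sum_const_zero, add_zero]
  congr 2
  ext p
  simp only [mem_filter, mem_Icc, mem_Ioc, mem_Ico]
  have := mem_Icc.1 hi
  omega

lemma sum_Icc_comp_add_one {M : Type*} [AddCommMonoid M] (g : ℤ → M) {a b : ℤ} (hab : a ≤ b)
    (hg : g (b + 1) = g a) :
    ∑ p ∈ Icc a b, g (p + 1) = ∑ p ∈ Icc a b, g p := by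
  have hshift : ∑ p ∈ Icc a b, g (p + 1) = ∑ p ∈ Icc (a + 1) (b + 1), g p := by
    rw [← map_add_right_Icc, sum_map]
    rfl
  rw [hshift, ← insert_Icc_right_eq_Icc_add_one (by omega), ← insert_Icc_add_one_left_eq_Icc hab,
    sum_insert (by simp), sum_insert (by simp), hg]

lemma sum_Icc_mul_sub_shift_of_eqOn_indicator {M : Type*} [Ring M] {h δ : ℤ → M} {a b i : ℤ}
    (hi : i ∈ Icc a b) (hδ : ∀ k ∈ Icc a b, δ k = if k = i then 1 else 0)
    (hh : h b = h (a - 1)) (hδ' : δ (b + 1) = δ a) :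
    ∑ p ∈ Icc a b, h p * (δ (p + 1) - δ p) = h (i - 1) - h i := by
  have hab : a ≤ b := (mem_Icc.1 hi).1.trans (mem_Icc.1 hi).2
  have hshift : ∑ p ∈ Icc a b, h p * δ (p + 1) = ∑ p ∈ Icc a b, h (p - 1) * δ p := by
    simpa using sum_Icc_comp_add_one (fun p => h (p - 1) * δ p) hab (by simp [hh, hδ'])
  simp only [mul_sub, sum_sub_distrib, hshift]
  rw [sum_mul_eq_ite_of_eqOn_indicator hδ, sum_mul_eq_ite_of_eqOn_indicator hδ,
    if_pos hi, if_pos hi]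

lemma sum_Ico_eq_sum_Ioc_add_sum_Ico_of_periodic {M : Type*} [AddCommMonoid M] {f : ℤ → M}
    {n : ℤ} (hf : Function.Periodic f n) {i : ℤ} (hi : i ∈ Icc 1 n) :
    ∑ j ∈ Ico (i + 1) (i + n), f j = ∑ j ∈ Ioc i n, f j + ∑ j ∈ Ico 1 i, f j := by
  rw [mem_Icc] at hi
  have hsplit : Ico (i + 1) (i + n) = Ioc i n ∪ Ico (n + 1) (i + n) := by
    ext x
    simp only [mem_Ico, mem_union, mem_Ioc]
    omega
  have hdisj : Disjoint (Ioc i n) (Ico (n + 1) (i + n)) := by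
    simp only [disjoint_left, mem_Ioc, mem_Ico]
    omega
  rw [hsplit, sum_union hdisj, add_comm n 1, ← map_add_right_Ico, sum_map]
  exact congrArg _ (sum_congr rfl fun x _ => hf x)

lemma inv_mul_fchem_extPer {N : ℕ} (hN : N ≠ 0) {L : ℝ} (hL : L ≠ 0) (u : ℤ → ℝ) {i : ℤ}
    (hi : i ∈ Icc (1:ℤ) N) :
    (N:ℝ)⁻¹ * fchem N L (extPer N L u) i
      = (N:ℝ)⁻¹ ^ 2 *
          (∑ p ∈ Ico 1 i, 2 * π / L ^ 2 * cot (π * (extPer N L u i - extPer N L u p) / L)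
            - ∑ q ∈ Ioc i (N:ℤ), 2 * π / L ^ 2 * cot (π * (extPer N L u q - extPer N L u i) / L))
        + (N:ℝ)⁻¹ * ((-(1 / (extPer N L u i - extPer N L u (i - 1)))
            - (N:ℝ)⁻¹ ^ 2 / (extPer N L u i - extPer N L u (i - 1)) ^ 3)
          - (-(1 / (extPer N L u (i + 1) - extPer N L u i))
            - (N:ℝ)⁻¹ ^ 2 / (extPer N L u (i + 1) - extPer N L u i) ^ 3)) := by
  have hrefl : ∀ p, cot (π * (extPer N L u i - extPer N L u p) / L)
      = -cot (π * (extPer N L u p - extPer N L u i) / L) := fun p => by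
    rw [← Real.cot_neg_s10]
    ring_nf
  rw [fchem, sum_Ico_eq_sum_Ioc_add_sum_Ico_of_periodic (periodic_cot_extPer_sub hN hL u _) hi]
  simp only [hrefl, mul_neg, sum_neg_distrib, ← mul_sum]
  ring

section Configuration

variable {N : ℕ} {L : ℝ} {v : ℤ → ℝ}

lemma sub_lt_of_strictMonoOn_Icc (hv : StrictMonoOn v (Set.Icc 1 N)) (hlast : v N < v 1 + L)
    {p q : ℤ} (hp : p ∈ Icc (1:ℤ) N) (hq : q ∈ Icc (1:ℤ) N) : v q - v p < L := by
  obtain ⟨hp1, hpN⟩ := mem_Icc.1 hp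
  obtain ⟨hq1, hqN⟩ := mem_Icc.1 hq
  have h₁ : v 1 ≤ v p := hv.monotoneOn ⟨le_rfl, hp1.trans hpN⟩ ⟨hp1, hpN⟩ hp1
  have h₂ : v q ≤ v N := hv.monotoneOn ⟨hq1, hqN⟩ ⟨hq1.trans hqN, le_rfl⟩ hqN
  linarith

lemma sin_pi_mul_extPer_sub_div_ne_zero (hv : StrictMonoOn v (Set.Icc 1 N))
    (hlast : v N < v 1 + L) {p q : ℤ} (hp : p ∈ Icc (1:ℤ) N) (hq : q ∈ Ioc p (N:ℤ)) :
    sin (π * (extPer N L v q - extPer N L v p) / L) ≠ 0 := by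
  obtain ⟨hp1, hpN⟩ := mem_Icc.1 hp
  obtain ⟨hpq, hqN⟩ := mem_Ioc.1 hq
  have hq' : q ∈ Icc (1:ℤ) N := mem_Icc.2 ⟨by omega, hqN⟩
  rw [extPer_of_mem_Icc L v hp, extPer_of_mem_Icc L v hq']
  have hpos : 0 < v q - v p := sub_pos.2 (hv ⟨hp1, hpN⟩ (mem_Icc.1 hq') hpq)
  have hL : 0 < L := hpos.trans (sub_lt_of_strictMonoOn_Icc hv hlast hp hq')
  refine (sin_pos_of_pos_of_lt_pi (by positivity) ?_).ne'
  rw [div_lt_iff₀ hL]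
  nlinarith [pi_pos, sub_lt_of_strictMonoOn_Icc hv hlast hp hq']

lemma extPer_sub_pos (hv : StrictMonoOn v (Set.Icc 1 N)) (hlast : v N < v 1 + L)
    {p : ℤ} (hp : p ∈ Icc (1:ℤ) N) : 0 < extPer N L v (p + 1) - extPer N L v p := by
  obtain ⟨hp1, hpN⟩ := mem_Icc.1 hp
  rw [extPer_of_mem_Icc L v hp]
  rcases hpN.lt_or_eq with hlt | rfl
  · rw [extPer_of_mem_Icc L v (mem_Icc.2 ⟨by omega, by omega⟩)]
    exact sub_pos.2 (hv ⟨hp1, hpN⟩ ⟨by omega, by omega⟩ (lt_add_one p))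
  · rw [add_comm, extPer_add_period (by omega), extPer_of_mem_Icc L v (mem_Icc.2 ⟨le_rfl, hp1⟩)]
    linarith

end Configuration

theorem stmt_10_general (N : ℕ) (L : ℝ) (v : ℤ → ℝ)
    (hmono : ∀ i : ℤ, 1 ≤ i → i ≤ (N:ℤ) - 1 → v i < v (i + 1))
    (hlast : v (N:ℤ) < v 1 + L)
    (i : ℤ) (hi1 : 1 ≤ i) (hiN : i ≤ (N:ℤ)) :
    HasDerivAt (fun s : ℝ => energyN N L (extPer N L (Function.update v i s)))
      ((N:ℝ)⁻¹ * fchem N L (extPer N L v) i) (v i) := by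
  have hi : i ∈ Icc (1:ℤ) N := mem_Icc.2 ⟨hi1, hiN⟩
  have hN : N ≠ 0 := by omega
  have hv : StrictMonoOn v (Set.Icc 1 N) :=
    strictMonoOn_of_lt_add_one Set.ordConnected_Icc fun p _ hp hp' =>
      hmono p hp.1 (by linarith [hp'.2])
  have hL : L ≠ 0 := by
    have := sub_lt_of_strictMonoOn_Icc hv hlast hi hi
    linarith
  have hδ : ∀ k ∈ Icc (1:ℤ) N, extPer N 0 (Pi.single i (1:ℝ)) k = if k = i then 1 else 0 :=
    fun k hk => by rw [extPer_of_mem_Icc _ _ hk, Pi.single_apply]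
  have H := hasDerivAt_energyN_s10 (γ := fun s => extPer N L (Function.update v i s))
    (fun k => hasDerivAt_extPer_update N L v i k (v i))
    (by simpa only [Function.update_eq_self] using
      fun p hp q hq => sin_pi_mul_extPer_sub_div_ne_zero hv hlast hp hq)
    (by simpa only [Function.update_eq_self] using fun p hp => (extPer_sub_pos hv hlast hp).ne')
  simp only [Function.update_eq_self] at H
  refine H.congr_deriv ?_
  rw [sum_Icc_sum_Ioc_mul_sub_of_eqOn_indicator _ hi hδ,
    sum_Icc_mul_sub_shift_of_eqOn_indicator hi hδ ?gap ?shift, sub_add_cancel,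
    inv_mul_fchem_extPer hN hL v hi]
  case gap =>
    have hgap := periodic_extPer_add_sub hN L v 1 0
    simp only [zero_add] at hgap
    simp only [sub_self, zero_add, hgap]
  case shift =>
    rw [add_comm, extPer_add_period hN, add_zero]

/-- Gradient structure of the discrete energy: regarding `E^N` as a function
of `(x₁, …, x_N)` on `{x₁ < ⋯ < x_N < x₁ + L}` (with conventions `x₀ = x_N − L`,
`x_{N+1} = x₁ + L`, implemented by the periodic extension `extPer`), its partial derivative in
the `i`-th coordinate is `∂E^N/∂x_i = a·f_i` with `a = 1/N`. -/
theorem stmt_10 (N : ℕ) (hN : 2 ≤ N) (L : ℝ) (hL : 0 < L) (v : ℤ → ℝ)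
    (hmono : ∀ i : ℤ, 1 ≤ i → i ≤ (N:ℤ) - 1 → v i < v (i + 1))
    (hlast : v (N:ℤ) < v 1 + L)
    (i : ℤ) (hi1 : 1 ≤ i) (hiN : i ≤ (N:ℤ)) :
    HasDerivAt (fun s : ℝ => energyN N L (extPer N L (Function.update v i s)))
      ((N:ℝ)⁻¹ * fchem N L (extPer N L v) i) (v i) :=
  stmt_10_general N L v hmono hlast i hi1 hiN
end

section
/- Let m₁, m₂ > 0 and let φ : ℝ → ℝ be C⁶ with φ′(α) ≤ −m₁ < 0 and |φ^{(k)}(α)| ≤ m₂ for all α and 1 ≤ k ≤ 6. Then there exist a₀ > 0 and C > 0, depending only on m₁ and m₂, such that for all α ∈ ℝ and all a ∈ (0, a₀]: | 1/(φ(α−a) − φ(α)) − 1/(φ(α) − φ(α+a)) − ( −φ″(α)/φ′(α)² ) − v₂(α)·a² | ≤ C·a⁴, where v₂(α) := −φ⁗(α)/(12 φ′(α)²) + (φ″(α)/φ′(α)⁴)·( (1/3) φ′(α) φ‴(α) − (1/4) φ″(α)² ). -/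
/-!
Write `x = φ(α-a) - φ(α)` and `y = φ(α) - φ(α+a)`. Since `φ' ≤ -m₁`, both are at least `m₁ a`,
and `1/x - 1/y - M = (y - x - M x y) / (x y)` with `x y ≥ m₁² a²`. Expanding `φ(α ± a)` to fifth
order with a sixth-order remainder turns the numerator, for `M = -φ''/φ'² + v₂ a²`, into `a⁶` times
a polynomial in `1/φ'`, `φ', …, φ⁽⁵⁾`, `a` and the two remainders: `-φ''/φ'²` and `v₂` are exactly
the coefficients that kill its `a²` and `a⁴` terms. On the compact box where all these arguments
are bounded in terms of `m₁, m₂` the polynomial is bounded, which gives `C`.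
-/

open Real Filter Topology

noncomputable def v2coef (φ : ℝ → ℝ) (α : ℝ) : ℝ :=
  -(iteratedDeriv 4 φ α) / (12 * (deriv φ α) ^ 2)
    + (iteratedDeriv 2 φ α / (deriv φ α) ^ 4)
      * ((1 / 3) * deriv φ α * iteratedDeriv 3 φ α - (1 / 4) * (iteratedDeriv 2 φ α) ^ 2)

open Finset Nat in
theorem abs_sub_sum_taylor_le {f : ℝ → ℝ} {n : ℕ} (hf : ContDiff ℝ (n + 1) f) {C : ℝ}
    (hC : ∀ y, |iteratedDeriv (n + 1) f y| ≤ C) (x h : ℝ) :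
    |f (x + h) - ∑ k ∈ range (n + 1), iteratedDeriv k f x * h ^ k / k !|
      ≤ C * |h| ^ (n + 1) / (n + 1)! := by
  rcases eq_or_ne h 0 with rfl | hh
  · simp [sum_range_succ']
  have hne : x ≠ x + h := by simpa using hh
  obtain ⟨y, -, hy⟩ := taylor_mean_remainder_lagrange_iteratedDeriv hne hf.contDiffOn
  have hu : UniqueDiffOn ℝ (Set.uIcc x (x + h)) := uniqueDiffOn_uIcc hne
  have htaylor : taylorWithinEval f n (Set.uIcc x (x + h)) x (x + h)
      = ∑ k ∈ range (n + 1), iteratedDeriv k f x * h ^ k / k ! := by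
    rw [taylor_within_apply]
    refine sum_congr rfl fun k hk => ?_
    rw [iteratedDerivWithin_eq_iteratedDeriv hu (hf.contDiffAt.of_le ?_) Set.left_mem_uIcc,
      smul_eq_mul, add_sub_cancel_left]
    · ring
    · exact_mod_cast (mem_range.1 hk).le
  rw [← htaylor, hy, add_sub_cancel_left, abs_div, abs_mul, abs_pow, Nat.abs_cast]
  gcongr
  exact hC y

theorem exists_eq_taylor_five {f : ℝ → ℝ} (hf : ContDiff ℝ 6 f) {C : ℝ}
    (hC : ∀ y, |iteratedDeriv 6 f y| ≤ C) (x h : ℝ) :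
    ∃ ε, |ε| ≤ C / 720 ∧ f (x + h) = f x + deriv f x * h + iteratedDeriv 2 f x * h ^ 2 / 2
      + iteratedDeriv 3 f x * h ^ 3 / 6 + iteratedDeriv 4 f x * h ^ 4 / 24
      + iteratedDeriv 5 f x * h ^ 5 / 120 + ε * h ^ 6 := by
  rcases eq_or_ne h 0 with rfl | hh
  · exact ⟨0, by simpa using div_nonneg ((abs_nonneg _).trans (hC x)) (by norm_num : (0 : ℝ) ≤ 720),
      by simp⟩
  have hT := abs_sub_sum_taylor_le (n := 5) hf hC x h
  simp only [Finset.sum_range_succ, Finset.sum_range_zero, iteratedDeriv_zero, iteratedDeriv_one,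
    Nat.factorial] at hT
  refine ⟨(f (x + h) - (f x + deriv f x * h + iteratedDeriv 2 f x * h ^ 2 / 2
      + iteratedDeriv 3 f x * h ^ 3 / 6 + iteratedDeriv 4 f x * h ^ 4 / 24
      + iteratedDeriv 5 f x * h ^ 5 / 120)) / h ^ 6, ?_, ?_⟩
  · rw [abs_div, abs_pow, div_le_div_iff₀ (by positivity) (by positivity)]
    norm_num at hT
    linarith
  · field_simp
    ring

theorem Continuous.exists_abs_le_on_cube {n : ℕ} {F : (Fin n → ℝ) → ℝ} (hF : Continuous F)
    (R : ℝ) : ∃ K, ∀ x : Fin n → ℝ, (∀ i, |x i| ≤ R) → |F x| ≤ K := by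
  have hcube : IsCompact (Set.Icc (fun _ : Fin n => -R) fun _ => R) := isCompact_Icc
  obtain ⟨K, hK⟩ := hcube.exists_bound_of_continuousOn hF.continuousOn
  exact ⟨K, fun x hx => hK x ⟨fun i => (abs_le.1 (hx i)).1, fun i => (abs_le.1 (hx i)).2⟩⟩

/- `w` stands for `1/p`; keeping it a separate variable makes this a polynomial. With `A`, `B` the
odd and even parts of the quintic Taylor polynomial and `M = M₀ + a² M₁`, the last bracket is
`(2B - M (B² - A²)) / a⁶`; the other terms come from the sixth-order remainders `εp a⁶`, `εm a⁶`. -/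
noncomputable def repulsionRemainder (w p q r s t a εp εm : ℝ) : ℝ :=
  let b := q / 2 + s * a ^ 2 / 24
  let c := r / 6 + t * a ^ 2 / 120
  let M₀ := -q * w ^ 2
  let M₁ := -s * w ^ 2 / 12 + q * w ^ 4 * (p * r / 3 - q ^ 2 / 4)
  let A := a * (p + a ^ 2 * c)
  let B := a ^ 2 * b
  (M₀ + a ^ 2 * M₁) * (εm * (A + B) + εp * (B - A) + a ^ 6 * εp * εm) - εp - εm
    - (-M₀ * (q * s / 24 + s ^ 2 * a ^ 2 / 576) + M₀ * p * t / 60 - M₁ * b ^ 2 + M₀ * c ^ 2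
      + 2 * M₁ * p * c + a ^ 2 * M₁ * c ^ 2)

theorem repulsion_numerator_eq {p q r s t v a εp εm fl fc fr : ℝ} (hp : p ≠ 0)
    (hv : v = -s / (12 * p ^ 2) + q / p ^ 4 * (1 / 3 * p * r - 1 / 4 * q ^ 2))
    (hl : fl = fc + p * (-a) + q * (-a) ^ 2 / 2 + r * (-a) ^ 3 / 6 + s * (-a) ^ 4 / 24
      + t * (-a) ^ 5 / 120 + εm * (-a) ^ 6)
    (hr : fr = fc + p * a + q * a ^ 2 / 2 + r * a ^ 3 / 6 + s * a ^ 4 / 24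
      + t * a ^ 5 / 120 + εp * a ^ 6) :
    (fc - fr) - (fl - fc) - (-q / p ^ 2 + v * a ^ 2) * ((fl - fc) * (fc - fr))
      = a ^ 6 * repulsionRemainder p⁻¹ p q r s t a εp εm := by
  subst hv hl hr
  unfold repulsionRemainder
  field_simp
  ring

theorem exists_abs_repulsionRemainder_le {m₁ : ℝ} (hm₁ : 0 < m₁) (m₂ : ℝ) :
    ∃ K, 0 < K ∧ ∀ p q r s t a εp εm : ℝ, m₁ ≤ |p| → |p| ≤ m₂ → |q| ≤ m₂ → |r| ≤ m₂ →
      |s| ≤ m₂ → |t| ≤ m₂ → |a| ≤ 1 → |εp| ≤ m₂ → |εm| ≤ m₂ →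
        |repulsionRemainder p⁻¹ p q r s t a εp εm| ≤ K := by
  have hcont : Continuous fun x : Fin 9 → ℝ =>
      repulsionRemainder (x 0) (x 1) (x 2) (x 3) (x 4) (x 5) (x 6) (x 7) (x 8) := by
    unfold repulsionRemainder
    fun_prop
  obtain ⟨K, hK⟩ := hcont.exists_abs_le_on_cube (max (max m₂ 1) m₁⁻¹)
  refine ⟨max K 1, by positivity, fun p q r s t a εp εm hp₁ hp hq hr hs ht ha hεp hεm =>
    le_max_of_le_left (hK ![p⁻¹, p, q, r, s, t, a, εp, εm] fun i => ?_)⟩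
  have hm₂ : m₂ ≤ max (max m₂ 1) m₁⁻¹ := le_max_of_le_left (le_max_left _ _)
  fin_cases i <;> simp only [Fin.reduceFinMk, Matrix.cons_val]
  · rw [abs_inv]
    exact (inv_anti₀ hm₁ hp₁).trans (le_max_right _ _)
  exacts [hp.trans hm₂, hq.trans hm₂, hr.trans hm₂, hs.trans hm₂, ht.trans hm₂,
    ha.trans (le_max_of_le_left (le_max_right _ _)), hεp.trans hm₂, hεm.trans hm₂]

theorem abs_one_div_sub_one_div_sub_le {x y c δ K : ℝ} (hδ : 0 < δ) (hx : δ ≤ x) (hy : δ ≤ y)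
    (h : |y - x - c * (x * y)| ≤ K) : |1 / x - 1 / y - c| ≤ K / δ ^ 2 := by
  have hx₀ : 0 < x := hδ.trans_le hx
  have hxy : 1 / x - 1 / y - c = (y - x - c * (x * y)) / (x * y) := by
    field_simp [(hδ.trans_le hy).ne']
  rw [hxy, abs_div, abs_of_pos (mul_pos hx₀ (hδ.trans_le hy)), sq]
  exact div_le_div₀ ((abs_nonneg _).trans h) h (mul_pos hδ hδ) (mul_le_mul hx hy hδ.le hx₀.le)

/-- Expansion of the nearest-neighbour repulsion term: for `C⁶` step-location
functions `φ` with `φ′ ≤ −m₁ < 0` and `|φ^{(k)}| ≤ m₂` (`1 ≤ k ≤ 6`), uniformly in `α` and in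
`a ∈ (0, a₀]`,
`1/(φ(α−a)−φ(α)) − 1/(φ(α)−φ(α+a)) = −φ″(α)/φ′(α)² + v₂(α)·a² + O(a⁴)`,
with `a₀, C` depending only on `m₁, m₂`. -/
theorem stmt_11 (m₁ m₂ : ℝ) (hm₁ : 0 < m₁) (hm₂ : 0 < m₂) :
    ∃ a₀ C : ℝ, 0 < a₀ ∧ 0 < C ∧
      ∀ φ : ℝ → ℝ, ContDiff ℝ 6 φ →
        (∀ α : ℝ, deriv φ α ≤ -m₁) →
        (∀ k : ℕ, 1 ≤ k → k ≤ 6 → ∀ α : ℝ, |iteratedDeriv k φ α| ≤ m₂) →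
        ∀ α a : ℝ, 0 < a → a ≤ a₀ →
          |1 / (φ (α - a) - φ α) - 1 / (φ α - φ (α + a))
              - (-(iteratedDeriv 2 φ α) / (deriv φ α) ^ 2)
              - v2coef φ α * a ^ 2|
            ≤ C * a ^ 4 := by
  obtain ⟨K, hK, hbound⟩ := exists_abs_repulsionRemainder_le hm₁ m₂
  refine ⟨1, K / m₁ ^ 2, one_pos, by positivity, fun φ hφ hφ' hbd α a ha ha₁ => ?_⟩
  have hdiff : Differentiable ℝ φ := hφ.differentiable (by norm_num)
  have hx : m₁ * a ≤ φ (α - a) - φ α := by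
    nlinarith [image_sub_le_mul_sub_of_deriv_le hdiff hφ' (sub_le_self α ha.le)]
  have hy : m₁ * a ≤ φ α - φ (α + a) := by
    nlinarith [image_sub_le_mul_sub_of_deriv_le hdiff hφ' (le_add_of_nonneg_right (a := α) ha.le)]
  have hp : m₁ ≤ |deriv φ α| := (le_neg.1 (hφ' α)).trans (neg_le_abs _)
  obtain ⟨εr, hεr, hr⟩ := exists_eq_taylor_five hφ (hbd 6 (by norm_num) le_rfl) α a
  obtain ⟨εl, hεl, hl⟩ := exists_eq_taylor_five hφ (hbd 6 (by norm_num) le_rfl) α (-a)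
  rw [← sub_eq_add_neg] at hl
  have hR := hbound _ _ _ _ _ a εr εl hp (by simpa using hbd 1 le_rfl (by norm_num) α)
    (hbd 2 (by norm_num) (by norm_num) α) (hbd 3 (by norm_num) (by norm_num) α)
    (hbd 4 (by norm_num) (by norm_num) α) (hbd 5 (by norm_num) (by norm_num) α)
    (by rwa [abs_of_pos ha]) (hεr.trans (div_le_self hm₂.le (by norm_num)))
    (hεl.trans (div_le_self hm₂.le (by norm_num)))
  rw [sub_sub]
  calc _ ≤ K * a ^ 6 / (m₁ * a) ^ 2 := by
        refine abs_one_div_sub_one_div_sub_le (by positivity) hx hy ?_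
        rw [repulsion_numerator_eq (v := v2coef φ α) (abs_pos.1 (hm₁.trans_le hp)) rfl hl hr,
          abs_mul, abs_of_nonneg (by positivity), mul_comm]
        gcongr
    _ = K / m₁ ^ 2 * a ^ 4 := by field_simp
end
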